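/- Let R be a ring, b ∈ Z(R) a nilpotent central element, l ≥ 1, z ∈ Z(R) a central non-zero-divisor, and φ a ring automorphism of R with φ^l(z) − z ∈ bR. Set τ = z·φ(z)⋯φ^{l−1}(z) = y^l x^l. Then for every M ∈ 𝒪(H(R, φ, z)) the element τ acts locally nilpotently on M: for every m ∈ M there exists n with τⁿ·m = 0. -/

import Mathlib

/-!
Since `τ = y^l x^l` with `l ≥ 1`, every vector killed by `x` is killed by `τ`. Moving `x` past `τ`
turns it into `τ' = φ⁻¹(τ)`, that is `x τ = τ' x`. The difference
`φ(τ) - τ = φ(z)⋯φ^{l-1}(z) (φ^l(z) - z)` lies in `bR`, so `τ - τ'` is nilpotent, say of order `N`,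
and as `τ` and `τ'` commute, `τ'^(n+N)` is a left multiple of `τ^n`. Induct on the order of
nilpotency of `x` at `m`: if `τ^n` kills `x • m`, then `x • τ^(n+N) • m = τ'^(n+N) • x • m = 0`,
so `τ^(n+N+1)` kills `m`.
-/

universe u

variable (R : Type u) [Ring R] (φ : R ≃+* R) (z : R)

/-- The defining relations of the generalized Weyl algebra `H(R, φ, z)`, presented as a quotient
of the free `ℤ`-algebra on the underlying set of `R` together with two generators `x` (encoded
as `Sum.inr 0`) and `y` (encoded as `Sum.inr 1`).  The first three families of relations encode
the ring structure of `R`; the remaining ones are the GWA relations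
`yx = z`, `xy = φ⁻¹(z)`, `xr = φ⁻¹(r)x`, `yr = φ(r)y`. -/
inductive GWARel : FreeAlgebra ℤ (R ⊕ Fin 2) → FreeAlgebra ℤ (R ⊕ Fin 2) → Prop
  | add (r s : R) : GWARel
      (FreeAlgebra.ι ℤ (Sum.inl r) + FreeAlgebra.ι ℤ (Sum.inl s))
      (FreeAlgebra.ι ℤ (Sum.inl (r + s)))
  | mul (r s : R) : GWARel
      (FreeAlgebra.ι ℤ (Sum.inl r) * FreeAlgebra.ι ℤ (Sum.inl s))
      (FreeAlgebra.ι ℤ (Sum.inl (r * s)))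
  | one : GWARel (FreeAlgebra.ι ℤ (Sum.inl (1 : R))) 1
  | yx : GWARel (FreeAlgebra.ι ℤ (Sum.inr 1) * FreeAlgebra.ι ℤ (Sum.inr 0))
      (FreeAlgebra.ι ℤ (Sum.inl z))
  | xy : GWARel (FreeAlgebra.ι ℤ (Sum.inr 0) * FreeAlgebra.ι ℤ (Sum.inr 1))
      (FreeAlgebra.ι ℤ (Sum.inl (φ.symm z)))
  | xr (r : R) : GWARel (FreeAlgebra.ι ℤ (Sum.inr 0) * FreeAlgebra.ι ℤ (Sum.inl r))
      (FreeAlgebra.ι ℤ (Sum.inl (φ.symm r)) * FreeAlgebra.ι ℤ (Sum.inr 0))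
  | yr (r : R) : GWARel (FreeAlgebra.ι ℤ (Sum.inr 1) * FreeAlgebra.ι ℤ (Sum.inl r))
      (FreeAlgebra.ι ℤ (Sum.inl (φ r)) * FreeAlgebra.ι ℤ (Sum.inr 1))

/-- The generalized Weyl algebra `H(R, φ, z)`. -/
abbrev GWA : Type u := RingQuot (GWARel R φ z)

/-- The generator `x` of the generalized Weyl algebra. -/
noncomputable def GWA.X : GWA R φ z :=
  RingQuot.mkRingHom (GWARel R φ z) (FreeAlgebra.ι ℤ (Sum.inr 0))

/-- The generator `y` of the generalized Weyl algebra. -/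
noncomputable def GWA.Y : GWA R φ z :=
  RingQuot.mkRingHom (GWARel R φ z) (FreeAlgebra.ι ℤ (Sum.inr 1))

/-- The canonical ring homomorphism `R → H(R, φ, z)`. -/
noncomputable def GWA.ofBase : R →+* GWA R φ z where
  toFun r := RingQuot.mkRingHom (GWARel R φ z) (FreeAlgebra.ι ℤ (Sum.inl r))
  map_one' := by
    have := RingQuot.mkRingHom_rel (GWARel.one (R := R) (φ := φ) (z := z))
    simpa using this
  map_mul' r s := by
    have := RingQuot.mkRingHom_rel (GWARel.mul (φ := φ) (z := z) r s)
    simp only [map_mul] at this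
    exact this.symm
  map_zero' := by
    have := RingQuot.mkRingHom_rel (GWARel.add (φ := φ) (z := z) 0 0)
    simp only [map_add, add_zero] at this
    exact add_eq_left.mp this
  map_add' r s := by
    have := RingQuot.mkRingHom_rel (GWARel.add (φ := φ) (z := z) r s)
    simp only [map_add] at this
    exact this.symm

theorem Commute.pow_rightDvd_pow_of_sub_pow_eq_zero {S : Type*} [Ring S] {x y : S} {n m p : ℕ}
    (hp : n + m ≤ p + 1) (h_comm : Commute x y) (h : (x - y) ^ n = 0) : x ^ m ∣ᵣ y ^ p :=
  rightDvd_iff_op_dvd_op.mpr <| by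
    simpa using
      h_comm.op.pow_dvd_pow_of_sub_pow_eq_zero hp (by simpa using congrArg MulOpposite.op h)

theorem exists_pow_smul_eq_zero_of_semiconjBy {S M : Type*} [Ring S] [AddCommGroup M] [Module S M]
    {x t t' : S} (hsemi : SemiconjBy x t t') (hcomm : Commute t t') (hnil : IsNilpotent (t - t'))
    (hker : ∀ v : M, x • v = 0 → t • v = 0) {m : M} {j : ℕ} (hm : x ^ j • m = 0) :
    ∃ n : ℕ, t ^ n • m = 0 := by
  obtain ⟨N, hN⟩ := hnil
  induction j generalizing m with
  | zero => exact ⟨0, by simpa using hm⟩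
  | succ j ih =>
    obtain ⟨n, hn⟩ := ih (m := x • m) (by rwa [smul_smul, ← pow_succ])
    obtain ⟨a, ha⟩ := hcomm.pow_rightDvd_pow_of_sub_pow_eq_zero (m := n) (p := n + N) (by omega) hN
    have hx : x • t ^ (n + N) • m = 0 := by
      rw [smul_smul, (hsemi.pow_right _).eq, ha, mul_assoc, mul_smul, mul_smul, hn, smul_zero]
    exact ⟨n + N + 1, by rw [pow_succ', mul_smul, hker _ hx]⟩

section

variable {R : Type u} [Ring R] {φ : R ≃+* R} {z : R}

variable (φ z) in
def orbitProd (l : ℕ) : R := ((List.range l).map fun i => (φ ^ i) z).prod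

theorem orbitProd_succ (l : ℕ) : orbitProd φ z (l + 1) = z * φ (orbitProd φ z l) := by
  simp only [orbitProd, List.prod_range_succ', map_list_prod, List.map_map, pow_zero, pow_succ']
  rfl

theorem orbitProd_succ' (l : ℕ) : orbitProd φ z (l + 1) = orbitProd φ z l * (φ ^ l) z :=
  List.prod_range_succ _ l

theorem orbitProd_mem_center (hz : z ∈ Set.center R) (l : ℕ) :
    orbitProd φ z l ∈ Set.center R :=
  Submonoid.list_prod_mem (Submonoid.center R) fun _ hx => by
    obtain ⟨i, -, rfl⟩ := List.mem_map.mp hx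
    exact MulEquivClass.apply_mem_center (φ ^ i) hz

theorem map_orbitProd_succ_sub (hz : z ∈ Set.center R) (l : ℕ) :
    φ (orbitProd φ z (l + 1)) - orbitProd φ z (l + 1) =
      φ (orbitProd φ z l) * ((φ ^ (l + 1)) z - z) := by
  have hφ : φ (orbitProd φ z (l + 1)) = φ (orbitProd φ z l) * (φ ^ (l + 1)) z := by
    rw [orbitProd_succ', map_mul, pow_succ']
    rfl
  rw [hφ, orbitProd_succ, mul_sub, ((Set.mem_center_iff.mp hz).comm _).eq]

theorem isNilpotent_map_orbitProd_sub {b r : R} (hb : b ∈ Set.center R) (hbnil : IsNilpotent b)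
    (hz : z ∈ Set.center R) {l : ℕ} (hφl : (φ ^ (l + 1)) z - z = b * r) :
    IsNilpotent (φ (orbitProd φ z (l + 1)) - orbitProd φ z (l + 1)) := by
  have hbc (a : R) : Commute b a := (Set.mem_center_iff.mp hb).comm a
  rw [map_orbitProd_succ_sub hz, hφl, ← mul_assoc, ← (hbc _).eq, mul_assoc]
  exact (hbc _).isNilpotent_mul_right hbnil

end

namespace GWA

variable {R : Type u} [Ring R] {φ : R ≃+* R} {z : R}

theorem Y_mul_X : Y R φ z * X R φ z = ofBase R φ z z :=
  (map_mul _ _ _).symm.trans (RingQuot.mkRingHom_rel GWARel.yx)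

theorem semiconjBy_X_ofBase (r : R) :
    SemiconjBy (X R φ z) (ofBase R φ z r) (ofBase R φ z (φ.symm r)) :=
  (map_mul _ _ _).symm.trans <| (RingQuot.mkRingHom_rel (GWARel.xr r)).trans (map_mul _ _ _)

theorem ofBase_orbitProd (l : ℕ) :
    ofBase R φ z (orbitProd φ z l) = Y R φ z ^ l * X R φ z ^ l := by
  induction l with
  | zero => simp [orbitProd]
  | succ l ih =>
    rw [orbitProd_succ, map_mul, ← Y_mul_X, mul_assoc, (semiconjBy_X_ofBase _).eq,
      RingEquiv.symm_apply_apply, ih, pow_succ', pow_succ]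
    noncomm_ring

end GWA

theorem statement7 (b : R) (hb : b ∈ Set.center R) (hbnil : IsNilpotent b)
    (l : ℕ) (hl : 1 ≤ l) (hz : z ∈ Set.center R)
    (hφl : ∃ r : R, (φ ^ l) z - z = b * r)
    (M : Type u) [AddCommGroup M] [Module (GWA R φ z) M]
    (hM : ∀ m : M, ∃ n : ℕ, (GWA.X R φ z) ^ n • m = 0) :
    ∀ m : M, ∃ n : ℕ,
      (GWA.ofBase R φ z (((List.range l).map fun i => (φ ^ i) z).prod)) ^ n • m = 0 := by
  obtain ⟨k, rfl⟩ := Nat.exists_eq_add_of_le' hl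
  obtain ⟨r, hr⟩ := hφl
  change ∀ m : M, ∃ n, GWA.ofBase R φ z (orbitProd φ z (k + 1)) ^ n • m = 0
  have hcomm : Commute (GWA.ofBase R φ z (orbitProd φ z (k + 1)))
      (GWA.ofBase R φ z (φ.symm (orbitProd φ z (k + 1)))) :=
    ((Set.mem_center_iff.mp (orbitProd_mem_center hz _)).comm _).map _
  have hnil : IsNilpotent (GWA.ofBase R φ z (orbitProd φ z (k + 1)) -
      GWA.ofBase R φ z (φ.symm (orbitProd φ z (k + 1)))) := by
    have := ((isNilpotent_map_orbitProd_sub hb hbnil hz hr).map φ.symm).map (GWA.ofBase R φ z)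
    rwa [map_sub, φ.symm_apply_apply, map_sub] at this
  have hker (v : M) (hv : GWA.X R φ z • v = 0) :
      GWA.ofBase R φ z (orbitProd φ z (k + 1)) • v = 0 := by
    rw [GWA.ofBase_orbitProd, pow_succ (GWA.X R φ z), ← mul_assoc, mul_smul, hv, smul_zero]
  intro m
  obtain ⟨j, hj⟩ := hM m
  exact exists_pow_smul_eq_zero_of_semiconjBy (GWA.semiconjBy_X_ofBase _) hcomm hnil hker hj
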